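/- Let p ≥ 2 be an integer and let (τ,δ) ∈ 𝒯 with τ = g_p(δ) = 2√δ cos(π/p). Then S_{p+1} = −δ^{p/2} and T_p = (1 + δ^{p/2})/(δ − τ + 1). -/

import Mathlib

/-!
At resonance the discriminant `τ² − 4δ = −(2√δ sin(π/p))²` is negative, so the principal square
root gives `λ₁ = √δ e^{iπ/p}` and `λ₂ = √δ e^{−iπ/p}`, whence `λ₁^p = λ₂^p = −δ^{p/2}`. Since
`S_j (λ₂ − λ₁) = λ₂^j − λ₁^j` and `λ₁ ≠ λ₂`, both `S_{p+1}` and `T_p` reduce to geometric sums in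
two numbers with the same `p`-th power, and by Vieta
`(λ₁ − 1)(λ₂ − 1) = δ − τ + 1`, which equals `|λ₁ − 1|² > 0`.
-/

/-- λ₁ = (τ + √(τ²−4δ))/2, using the complex principal square root. -/
noncomputable def lam1 (τ δ : ℝ) : ℂ :=
  ((τ : ℂ) + ((τ : ℂ) ^ 2 - 4 * (δ : ℂ)) ^ ((1 : ℂ) / 2)) / 2

/-- λ₂ = (τ − √(τ²−4δ))/2, using the complex principal square root. -/
noncomputable def lam2 (τ δ : ℝ) : ℂ :=
  ((τ : ℂ) - ((τ : ℂ) ^ 2 - 4 * (δ : ℂ)) ^ ((1 : ℂ) / 2)) / 2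

/-- S_j = Σ_{k=1}^{j} λ₁^{j−k} λ₂^{k−1} (index shifted: k = k'+1). -/
noncomputable def Sseq (τ δ : ℝ) (j : ℕ) : ℂ :=
  ∑ k ∈ Finset.range j, lam1 τ δ ^ (j - 1 - k) * lam2 τ δ ^ k

/-- T_j = Σ_{i=1}^{j−1} S_i. -/
noncomputable def Tseq (τ δ : ℝ) (j : ℕ) : ℂ :=
  ∑ i ∈ Finset.Icc 1 (j - 1), Sseq τ δ i

open Complex Finset
open scoped Real

theorem cpow_half_ofReal_neg_sq {m : ℝ} (hm : 0 ≤ m) :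
    ((-(m ^ 2) : ℝ) : ℂ) ^ (1 / 2 : ℂ) = m * I := by
  have hsqrt : ((m ^ 2 : ℝ) : ℂ) ^ (1 / 2 : ℂ) = m := by
    rw [show (1 / 2 : ℂ) = ((1 / 2 : ℝ) : ℂ) by push_cast; rfl,
      ← ofReal_cpow (sq_nonneg m), ← Real.sqrt_eq_rpow, Real.sqrt_sq hm]
  have hI : exp (π * I * (1 / 2)) = I := by
    rw [show (π : ℂ) * I * (1 / 2) = ((π / 2 : ℝ) : ℂ) * I by push_cast; ring, exp_mul_I]
    simp
  rw [ofReal_cpow_of_nonpos (by nlinarith), ← ofReal_neg, neg_neg, hsqrt, hI]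

theorem sum_pow_mul_pow_mul_sub {R : Type*} [CommRing R] (a b : R) (n : ℕ) :
    (∑ k ∈ range n, a ^ (n - 1 - k) * b ^ k) * (b - a) = b ^ n - a ^ n := by
  simpa only [mul_comm (a ^ _)] using geom_sum₂_mul b a n

section

variable (τ δ : ℝ)

theorem lam1_add_lam2 : lam1 τ δ + lam2 τ δ = τ := by
  unfold lam1 lam2; ring

theorem lam1_mul_lam2 : lam1 τ δ * lam2 τ δ = δ := by
  have hsq := cpow_ofNat_inv_pow ((τ : ℂ) ^ 2 - 4 * δ) 2
  rw [← one_div] at hsq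
  unfold lam1 lam2
  linear_combination (-1 / 4 : ℂ) * hsq

theorem lam1_sub_one_mul_lam2_sub_one : (lam1 τ δ - 1) * (lam2 τ δ - 1) = δ - τ + 1 := by
  linear_combination lam1_mul_lam2 τ δ - lam1_add_lam2 τ δ

theorem Sseq_mul_sub (j : ℕ) :
    Sseq τ δ j * (lam2 τ δ - lam1 τ δ) = lam2 τ δ ^ j - lam1 τ δ ^ j :=
  sum_pow_mul_pow_mul_sub _ _ j

theorem Tseq_eq_sum_range (j : ℕ) : Tseq τ δ j = ∑ i ∈ range j, Sseq τ δ i := by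
  rcases Nat.eq_zero_or_pos j with rfl | hj
  · rfl
  rw [Tseq, range_eq_Ico, sum_eq_sum_Ico_succ_bot hj,
    Icc_sub_one_right_eq_Ico_of_not_isMin (by simpa using hj.ne')]
  simp [Sseq]

end

section

variable {τ δ : ℝ} {n : ℕ} {c : ℂ}

theorem Sseq_succ_of_pow_eq (hne : lam1 τ δ ≠ lam2 τ δ) (h1 : lam1 τ δ ^ n = c)
    (h2 : lam2 τ δ ^ n = c) : Sseq τ δ (n + 1) = c := by
  apply mul_right_cancel₀ (sub_ne_zero.mpr hne.symm)
  rw [Sseq_mul_sub, pow_succ, pow_succ, h1, h2]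
  ring

theorem Tseq_mul_of_pow_eq (hne : lam1 τ δ ≠ lam2 τ δ) (h1 : lam1 τ δ ^ n = c)
    (h2 : lam2 τ δ ^ n = c) : Tseq τ δ n * (δ - τ + 1) = 1 - c := by
  set a := lam1 τ δ
  set b := lam2 τ δ
  have hT : Tseq τ δ n * (b - a) = ∑ i ∈ range n, b ^ i - ∑ i ∈ range n, a ^ i := by
    rw [Tseq_eq_sum_range, sum_mul, ← sum_sub_distrib]
    exact sum_congr rfl fun i _ ↦ Sseq_mul_sub τ δ i
  have ha := geom_sum_mul a n
  have hb := geom_sum_mul b n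
  rw [h1] at ha
  rw [h2] at hb
  apply mul_right_cancel₀ (sub_ne_zero.mpr hne.symm)
  rw [← lam1_sub_one_mul_lam2_sub_one]
  linear_combination (a - 1) * (b - 1) * hT + (a - 1) * hb - (b - 1) * ha

end

section

variable {τ δ θ : ℝ}

theorem sqrt_discr_of_eq_two_mul_cos (hδ : 0 ≤ δ) (hθ : 0 ≤ Real.sin θ)
    (hτ : τ = 2 * √δ * Real.cos θ) :
    ((τ : ℂ) ^ 2 - 4 * δ) ^ (1 / 2 : ℂ) = (2 * √δ * Real.sin θ : ℝ) * I := by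
  have hdiscr : τ ^ 2 - 4 * δ = -(2 * √δ * Real.sin θ) ^ 2 := by
    rw [hτ]
    nlinarith [Real.sq_sqrt hδ, Real.sin_sq_add_cos_sq θ]
  rw [← cpow_half_ofReal_neg_sq (by positivity), ← hdiscr]
  push_cast; rfl

theorem lam1_eq_of_eq_two_mul_cos (hδ : 0 ≤ δ) (hθ : 0 ≤ Real.sin θ)
    (hτ : τ = 2 * √δ * Real.cos θ) : lam1 τ δ = √δ * exp (θ * I) := by
  rw [lam1, sqrt_discr_of_eq_two_mul_cos hδ hθ hτ, exp_mul_I, hτ]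
  push_cast; ring

theorem lam2_eq_of_eq_two_mul_cos (hδ : 0 ≤ δ) (hθ : 0 ≤ Real.sin θ)
    (hτ : τ = 2 * √δ * Real.cos θ) : lam2 τ δ = √δ * exp (-θ * I) := by
  rw [lam2, sqrt_discr_of_eq_two_mul_cos hδ hθ hτ, exp_mul_I, cos_neg, sin_neg, hτ]
  push_cast; ring

theorem exp_mul_I_pow_eq_neg_one {p : ℕ} (h : p * θ = π) : exp (θ * I) ^ p = -1 := by
  rw [← exp_nat_mul, ← mul_assoc, ← exp_pi_mul_I]
  exact_mod_cast congrArg (fun x : ℝ ↦ exp (x * I)) h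

theorem lam_pow_eq_neg_of_eq_two_mul_cos {p : ℕ} (hδ : 0 ≤ δ) (hθ : 0 ≤ Real.sin θ)
    (hτ : τ = 2 * √δ * Real.cos θ) (hpθ : p * θ = π) :
    lam1 τ δ ^ p = (-√δ ^ p : ℝ) ∧ lam2 τ δ ^ p = (-√δ ^ p : ℝ) := by
  rw [lam1_eq_of_eq_two_mul_cos hδ hθ hτ, lam2_eq_of_eq_two_mul_cos hδ hθ hτ, mul_pow, mul_pow,
    neg_mul, exp_neg, inv_pow, exp_mul_I_pow_eq_neg_one hpθ]
  push_cast; constructor <;> ring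

theorem lam1_ne_lam2_of_eq_two_mul_cos (hδ : 0 < δ) (hθ : 0 < Real.sin θ)
    (hτ : τ = 2 * √δ * Real.cos θ) : lam1 τ δ ≠ lam2 τ δ := by
  have hsub : lam1 τ δ - lam2 τ δ = (2 * √δ * Real.sin θ : ℝ) * I := by
    rw [← sqrt_discr_of_eq_two_mul_cos hδ.le hθ.le hτ, lam1, lam2]
    ring
  rw [← sub_ne_zero, hsub]
  have hm : 0 < 2 * √δ * Real.sin θ := by positivity
  exact mul_ne_zero (ofReal_ne_zero.mpr hm.ne') I_ne_zero

end

theorem Sseq_Tseq_at_resonance_general (p : ℕ) (hp : 2 ≤ p) (τ δ : ℝ)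
    (hδ0 : 0 < δ)
    (hres : τ = 2 * Real.sqrt δ * Real.cos (Real.pi / p)) :
    Sseq τ δ (p + 1) = ((-(δ ^ ((p : ℝ) / 2)) : ℝ) : ℂ) ∧
    Tseq τ δ p = (((1 + δ ^ ((p : ℝ) / 2)) / (δ - τ + 1) : ℝ) : ℂ) := by
  have hp0 : (p : ℝ) ≠ 0 := by positivity
  have hsin : 0 < Real.sin (π / p) := by
    have hp1 : (1 : ℝ) < p := by exact_mod_cast hp
    exact Real.sin_pos_of_pos_of_lt_pi (by positivity) (div_lt_self Real.pi_pos hp1)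
  have hne := lam1_ne_lam2_of_eq_two_mul_cos hδ0 hsin hres
  obtain ⟨h1, h2⟩ := lam_pow_eq_neg_of_eq_two_mul_cos hδ0.le hsin.le hres (mul_div_cancel₀ π hp0)
  have hpow : √δ ^ p = δ ^ ((p : ℝ) / 2) := by
    rw [Real.rpow_div_two_eq_sqrt _ hδ0.le, Real.rpow_natCast]
  have hden : 0 < δ - τ + 1 := by
    rw [hres]
    nlinarith [Real.sq_sqrt hδ0.le, Real.sin_sq_add_cos_sq (π / p),
      sq_nonneg (√δ - Real.cos (π / p))]
  rw [← hpow]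
  refine ⟨Sseq_succ_of_pow_eq hne h1 h2, ?_⟩
  rw [ofReal_div, eq_div_iff (ofReal_ne_zero.mpr hden.ne')]
  push_cast
  simpa using Tseq_mul_of_pow_eq hne h1 h2

/-- Let p ≥ 2 and (τ,δ) ∈ 𝒯 with τ = g_p(δ) = 2√δ cos(π/p).
Then S_{p+1} = −δ^{p/2} and T_p = (1 + δ^{p/2})/(δ − τ + 1). -/
theorem Sseq_Tseq_at_resonance (p : ℕ) (hp : 2 ≤ p) (τ δ : ℝ)
    (hδ0 : 0 < δ) (hδ1 : δ < 1) (hτT : |τ| < δ + 1)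
    (hres : τ = 2 * Real.sqrt δ * Real.cos (Real.pi / p)) :
    Sseq τ δ (p + 1) = ((-(δ ^ ((p : ℝ) / 2)) : ℝ) : ℂ) ∧
    Tseq τ δ p = (((1 + δ ^ ((p : ℝ) / 2)) / (δ - τ + 1) : ℝ) : ℂ) :=
  Sseq_Tseq_at_resonance_general p hp τ δ hδ0 hres
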